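/- arXiv:2508.16841 — 5 statements merged into one kernel-verified Lean document; each statement's English description precedes it below -/
import Mathlib

section
/- Let n ≥ 3 and let a₁, a₂, …, aₙ be real numbers such that for every index i ∈ {1, …, n} the inequality √((n−1)·(a₁² + ⋯ + aᵢ₋₁² + aᵢ₊₁² + ⋯ + aₙ²)) ≤ a₁ + a₂ + ⋯ + aₙ holds (i.e. for each i, the square root of (n−1) times the sum of the squares of the other n−1 numbers is at most the sum of all n numbers). Then aᵢ ≥ 0 for every i ∈ {1, …, n}. -/
/-- Algebraic claim underlying the convexity criterion for hypersurfaces: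
if for each index `i`, the square root of `(n-1)` times the sum of the squares of the
other `n-1` numbers is at most the sum of all `n` numbers, then all numbers are
nonnegative. -/
theorem casorati_convexity_claim (n : ℕ) (hn : 3 ≤ n) (a : Fin n → ℝ)
    (h : ∀ i : Fin n,
      Real.sqrt (((n : ℝ) - 1) * ∑ j ∈ Finset.univ.erase i, (a j) ^ 2) ≤ ∑ j, a j) :
    ∀ i : Fin n, 0 ≤ a i := by
  intro i
  set S := ∑ j, a j with hS
  have hmem : i ∈ (Finset.univ : Finset (Fin n)) := Finset.mem_univ i
  have hcard : ((Finset.univ.erase i).card : ℝ) = (n : ℝ) - 1 := by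
    rw [Finset.card_erase_of_mem hmem, Finset.card_univ, Fintype.card_fin]
    have : 1 ≤ n := by omega
    push_cast [Nat.cast_sub this]
    ring
  have hnonneg : 0 ≤ ((n : ℝ) - 1) * ∑ j ∈ Finset.univ.erase i, (a j) ^ 2 := by
    apply mul_nonneg
    · have : (3 : ℝ) ≤ (n : ℝ) := by exact_mod_cast hn
      linarith
    · positivity
  have hS0 : 0 ≤ S := le_trans (Real.sqrt_nonneg _) (h i)
  have hsq : ((n : ℝ) - 1) * ∑ j ∈ Finset.univ.erase i, (a j) ^ 2 ≤ S ^ 2 := by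
    have := Real.sqrt_le_sqrt (Real.sq_sqrt hnonneg).ge
    calc ((n : ℝ) - 1) * ∑ j ∈ Finset.univ.erase i, (a j) ^ 2
        = (Real.sqrt (((n : ℝ) - 1) * ∑ j ∈ Finset.univ.erase i, (a j) ^ 2)) ^ 2 :=
          (Real.sq_sqrt hnonneg).symm
      _ ≤ S ^ 2 := by
          apply pow_le_pow_left₀ (Real.sqrt_nonneg _) (h i)
  have hCS : (∑ j ∈ Finset.univ.erase i, a j) ^ 2
      ≤ ((n : ℝ) - 1) * ∑ j ∈ Finset.univ.erase i, (a j) ^ 2 := by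
    have := sq_sum_le_card_mul_sum_sq (s := Finset.univ.erase i) (f := a)
    calc (∑ j ∈ Finset.univ.erase i, a j) ^ 2
        ≤ ((Finset.univ.erase i).card : ℝ) * ∑ j ∈ Finset.univ.erase i, (a j) ^ 2 := by
          exact_mod_cast this
      _ = ((n : ℝ) - 1) * ∑ j ∈ Finset.univ.erase i, (a j) ^ 2 := by rw [hcard]
  have hsum : ∑ j ∈ Finset.univ.erase i, a j = S - a i := by
    rw [hS, Finset.sum_erase_eq_sub hmem]
  have h2 : (S - a i) ^ 2 ≤ S ^ 2 := by
    rw [← hsum]; exact le_trans hCS hsq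
  nlinarith [h2, hS0, sq_nonneg (a i)]
end

section
/- Let a, b, c be nonnegative real numbers with a + b + c = 1. Then 0 ≤ ab + bc + ca − 2abc ≤ 7/27. -/
/-! With `p = a + b + c`, `q = ab + bc + ca`, `r = abc`, the quantity is `pq - 2r` once
homogenized by `p = 1`. Expanded, `pq - 2r` is a sum of nonnegative monomials, which gives the
lower bound. The upper bound `27 (pq - 2r) ≤ 7p³` is six times Schur's inequality
`p³ - 4pq + 9r ≥ 0` plus `p (p² - 3q) ≥ 0`. -/

section

variable {R : Type*} [CommRing R] [LinearOrder R] [IsStrictOrderedRing R]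

theorem schur_inequality_of_le {a b c : R} (hc : 0 ≤ c) (hcb : c ≤ b) (hba : b ≤ a) :
    0 ≤ a * (a - b) * (a - c) + b * (b - a) * (b - c) + c * (c - a) * (c - b) := by
  have hsplit : a * (a - b) * (a - c) + b * (b - a) * (b - c) + c * (c - a) * (c - b) =
      (a - b) ^ 2 * (a + b - c) + c * (a - c) * (b - c) := by ring
  rw [hsplit]
  have hac : 0 ≤ a - c := by linarith
  have hbc : 0 ≤ b - c := by linarith
  exact add_nonneg (mul_nonneg (sq_nonneg _) (by linarith))
    (mul_nonneg (mul_nonneg hc hac) hbc)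

theorem schur_inequality {a b c : R} (ha : 0 ≤ a) (hb : 0 ≤ b) (hc : 0 ≤ c) :
    0 ≤ a * (a - b) * (a - c) + b * (b - a) * (b - c) + c * (c - a) * (c - b) := by
  rcases le_total a b with _ | _ <;> rcases le_total b c with _ | _ <;>
    rcases le_total a c with _ | _ <;>
  -- any three pairwise comparisons contain a chain `x ≤ y ≤ z` through all three variables
  first
    | linarith [schur_inequality_of_le hc ‹c ≤ b› ‹b ≤ a›]
    | linarith [schur_inequality_of_le hb ‹b ≤ c› ‹c ≤ a›]
    | linarith [schur_inequality_of_le hc ‹c ≤ a› ‹a ≤ b›]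
    | linarith [schur_inequality_of_le ha ‹a ≤ c› ‹c ≤ b›]
    | linarith [schur_inequality_of_le hb ‹b ≤ a› ‹a ≤ c›]
    | linarith [schur_inequality_of_le ha ‹a ≤ b› ‹b ≤ c›]

theorem sum_mul_sum_mul_sub_two_mul_nonneg {a b c : R} (ha : 0 ≤ a) (hb : 0 ≤ b) (hc : 0 ≤ c) :
    0 ≤ (a + b + c) * (a * b + b * c + c * a) - 2 * (a * b * c) := by
  have hexpand : (a + b + c) * (a * b + b * c + c * a) - 2 * (a * b * c) =
      a ^ 2 * b + a * b ^ 2 + b ^ 2 * c + b * c ^ 2 + c ^ 2 * a + c * a ^ 2 + a * b * c := by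
    ring
  rw [hexpand]
  positivity

theorem sum_mul_sum_mul_sub_two_mul_le {a b c : R} (ha : 0 ≤ a) (hb : 0 ≤ b) (hc : 0 ≤ c) :
    27 * ((a + b + c) * (a * b + b * c + c * a) - 2 * (a * b * c)) ≤ 7 * (a + b + c) ^ 3 := by
  have hschur := schur_inequality ha hb hc
  have hsq : 0 ≤ (a + b + c) * ((a - b) ^ 2 + (b - c) ^ 2 + (c - a) ^ 2) := by positivity
  linarith

end

/-- IMO 1984 Problem 1. Geometrically: for a strictly convex 3-dimensional hypersurface
with constant mean curvature `1/3`, one has `0 ≤ scal - 2K ≤ 7/27`. -/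
theorem imo1984_p1 (a b c : ℝ) (ha : 0 ≤ a) (hb : 0 ≤ b) (hc : 0 ≤ c)
    (habc : a + b + c = 1) :
    0 ≤ a * b + b * c + c * a - 2 * (a * b * c) ∧
      a * b + b * c + c * a - 2 * (a * b * c) ≤ 7 / 27 := by
  have hlower := sum_mul_sum_mul_sub_two_mul_nonneg ha hb hc
  have hupper := sum_mul_sum_mul_sub_two_mul_le ha hb hc
  rw [habc, one_mul] at hlower hupper
  constructor <;> linarith
end

section
/- Let n ≥ 2 and let λ₁, …, λₙ be real numbers that are not all equal. Let M = max{λ₁, …, λₙ} and m = min{λ₁, …, λₙ}, and set Q = (λ₁² + ⋯ + λₙ²) − (1/n)·(λ₁ + ⋯ + λₙ)². Then Q > 0 and 2/√n ≤ (M − m)/√Q ≤ √2. -/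
/-- Pointwise version of the limit theorem: at a non-umbilic point (eigenvalues not all
equal), `Q = ‖h‖² − nH² > 0` and the ratio `s(L)/√Q` lies in `[2/√n, √2]`. -/
theorem spread_ratio_bounds (n : ℕ) (hn : 2 ≤ n) (l : Fin n → ℝ)
    (hne : ∃ i j : Fin n, l i ≠ l j) (M m : ℝ)
    (hM : IsGreatest (Set.range l) M) (hm : IsLeast (Set.range l) m)
    (Q : ℝ) (hQ : Q = (∑ i, (l i) ^ 2) - (1 / (n : ℝ)) * (∑ i, l i) ^ 2) :
    0 < Q ∧ 2 / Real.sqrt n ≤ (M - m) / Real.sqrt Q ∧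
      (M - m) / Real.sqrt Q ≤ Real.sqrt 2 := by
  have hn0 : (0 : ℝ) < n := by positivity
  obtain ⟨⟨i₀, hi₀⟩, hMub⟩ := hM
  obtain ⟨⟨j₀, hj₀⟩, hmlb⟩ := hm
  have hle : ∀ i, m ≤ l i ∧ l i ≤ M := fun i =>
    ⟨hmlb ⟨i, rfl⟩, hMub ⟨i, rfl⟩⟩
  have hMm : m < M := by
    obtain ⟨i, j, hij⟩ := hne
    rcases lt_or_ge m M with h | h
    · exact h
    · exfalso
      have h1 := hle i
      have h2 := hle j
      have : l i = l j := by linarith [h1.1, h1.2, h2.1, h2.2]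
      exact hij this
  have hij₀ : i₀ ≠ j₀ := by
    intro h
    rw [h, hj₀] at hi₀
    exact (ne_of_lt hMm) hi₀
  set S := ∑ i, l i with hS
  set H : ℝ := S / n with hH
  -- Q as a sum of squared deviations
  have hQ' : Q = ∑ i, (l i - H) ^ 2 := by
    have : ∑ i, (l i - H) ^ 2 = (∑ i, (l i) ^ 2) - 2 * H * S + n * H ^ 2 := by
      simp only [sub_sq]
      rw [Finset.sum_add_distrib, Finset.sum_sub_distrib, ← Finset.sum_mul, ← Finset.mul_sum]
      simp [hS]
      ring
    rw [hQ, this, hH]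
    field_simp
    ring
  -- lower bound for Q
  have hQlb : (M - m) ^ 2 / 2 ≤ Q := by
    have hsub : ({i₀, j₀} : Finset (Fin n)) ⊆ Finset.univ := Finset.subset_univ _
    have hpair : ∑ i ∈ ({i₀, j₀} : Finset (Fin n)), (l i - H) ^ 2
        = (M - H) ^ 2 + (m - H) ^ 2 := by
      rw [Finset.sum_pair hij₀, hi₀, hj₀]
    have hle2 : ∑ i ∈ ({i₀, j₀} : Finset (Fin n)), (l i - H) ^ 2 ≤ ∑ i, (l i - H) ^ 2 :=
      Finset.sum_le_sum_of_subset_of_nonneg hsub (fun i _ _ => by positivity)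
    rw [hQ']
    nlinarith [sq_nonneg ((M - H) - (H - m)), hpair, hle2]
  have hQpos : 0 < Q := by nlinarith [sq_nonneg (M - m)]
  -- upper bound for Q (Popoviciu)
  have hsum_le : ∑ i, (l i) ^ 2 ≤ (M + m) * S - n * (M * m) := by
    have : ∀ i ∈ Finset.univ, (l i) ^ 2 ≤ (M + m) * l i - M * m := fun i _ => by
      have h := hle i
      nlinarith [mul_nonneg (sub_nonneg.2 h.2) (sub_nonneg.2 h.1)]
    calc ∑ i, (l i) ^ 2 ≤ ∑ i, ((M + m) * l i - M * m) := Finset.sum_le_sum this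
      _ = (M + m) * S - n * (M * m) := by
          rw [Finset.sum_sub_distrib, ← Finset.mul_sum]
          simp [hS, mul_comm]
  have hQub : 4 * Q ≤ n * (M - m) ^ 2 := by
    have key : (n : ℝ) * Q = n * (∑ i, (l i) ^ 2) - S ^ 2 := by
      rw [hQ]; field_simp
    have key2 : (n : ℝ) * (4 * Q) ≤ n * (n * (M - m) ^ 2) := by
      nlinarith [sq_nonneg (S - n * (M + m) / 2),
        mul_le_mul_of_nonneg_left hsum_le (le_of_lt hn0), key]
    exact le_of_mul_le_mul_left key2 hn0
  -- wrap up
  have hsqQ : 0 < Real.sqrt Q := Real.sqrt_pos.2 hQpos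
  have hsqn : 0 < Real.sqrt n := Real.sqrt_pos.2 hn0
  refine ⟨hQpos, ?_, ?_⟩
  · rw [div_le_div_iff₀ hsqn hsqQ]
    have h1 : 2 * Real.sqrt Q = Real.sqrt (4 * Q) := by
      rw [show (4:ℝ) = 2 ^ 2 by norm_num, Real.sqrt_mul (by positivity),
        Real.sqrt_sq (by norm_num : (0:ℝ) ≤ 2)]
    have h2 : (M - m) * Real.sqrt n = Real.sqrt ((M - m) ^ 2 * n) := by
      rw [Real.sqrt_mul (sq_nonneg _), Real.sqrt_sq (by linarith : (0:ℝ) ≤ M - m)]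
    rw [h1, h2]
    apply Real.sqrt_le_sqrt
    nlinarith [hQub]
  · rw [div_le_iff₀ hsqQ]
    have h2 : Real.sqrt 2 * Real.sqrt Q = Real.sqrt (2 * Q) := (Real.sqrt_mul (by norm_num : (0:ℝ) ≤ 2) Q).symm
    rw [h2]
    have : M - m = Real.sqrt ((M - m) ^ 2) := (Real.sqrt_sq (by linarith : (0:ℝ) ≤ M - m)).symm
    rw [this]
    apply Real.sqrt_le_sqrt
    nlinarith [hQlb]
end

section
/- Let k₁, k₂, k₃ be nonzero real numbers, and for distinct indices i, j define H̄ᵢⱼ = (|kᵢ| + |kⱼ|)/2. Then 2√2 < √(|k₁|/H̄₂₃) + √(|k₂|/H̄₁₃) + √(|k₃|/H̄₁₂). -/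
/-!
By AM–GM, `√(a t) ≤ (a + t) / 2`, hence `√(a / t) ≥ 2a / (a + t)` with equality only for
`a = t`. Applied with `t = b + c`, `a + c`, `a + b` the three lower bounds sum to exactly `2`,
and they cannot all be equalities since `a = b + c` and `b = a + c` force `c = 0`. The factor
`√2` comes from `H̄ᵢⱼ` being half of `|kᵢ| + |kⱼ|`.
-/

namespace Real

lemma two_mul_div_add_le_sqrt_div {a t : ℝ} (ha : 0 ≤ a) (ht : 0 < t) :
    2 * a / (a + t) ≤ √(a / t) := by
  rw [le_sqrt (by positivity) (by positivity), div_pow, div_le_div_iff₀ (by positivity) ht]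
  nlinarith [mul_nonneg ha (sq_nonneg (a - t))]

lemma two_mul_div_add_lt_sqrt_div {a t : ℝ} (ha : 0 < a) (ht : 0 < t) (hne : a ≠ t) :
    2 * a / (a + t) < √(a / t) := by
  rw [lt_sqrt (by positivity), div_pow, div_lt_div_iff₀ (by positivity) ht]
  nlinarith [mul_pos ha (sq_pos_of_ne_zero (sub_ne_zero.mpr hne))]

lemma two_lt_sqrt_div_add_sqrt_div_add_sqrt_div {a b c : ℝ} (ha : 0 < a) (hb : 0 < b)
    (hc : 0 < c) : 2 < √(a / (b + c)) + √(b / (a + c)) + √(c / (a + b)) := by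
  have hsum : 2 * a / (a + (b + c)) + 2 * b / (b + (a + c)) + 2 * c / (c + (a + b)) = 2 := by
    field_simp
    ring
  have hbc : 0 < b + c := by positivity
  have hac : 0 < a + c := by positivity
  have hab : 0 < a + b := by positivity
  have le_a := two_mul_div_add_le_sqrt_div ha.le hbc
  have le_b := two_mul_div_add_le_sqrt_div hb.le hac
  have le_c := two_mul_div_add_le_sqrt_div hc.le hab
  by_cases h : a = b + c
  · have lt_b := two_mul_div_add_lt_sqrt_div hb hac (by intro; linarith)
    linarith
  · have lt_a := two_mul_div_add_lt_sqrt_div ha hbc h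
    linarith

lemma sqrt_div_half (x y : ℝ) : √(x / (y / 2)) = √2 * √(x / y) := by
  rw [div_div_eq_mul_div, mul_comm, mul_div_assoc, sqrt_mul zero_le_two]

end Real

/-- The purely extrinsic curvature invariant
`B₀.₅⁰·⁵ = √(|k₁|/H̄₂₃) + √(|k₂|/H̄₁₃) + √(|k₃|/H̄₁₂)` is strictly bounded below by
`2√2`, where `H̄ᵢⱼ = (|kᵢ| + |kⱼ|)/2` are the absolute mean sectional curvatures. -/
theorem sqrt_nesbitt_curvature (k₁ k₂ k₃ : ℝ) (h₁ : k₁ ≠ 0) (h₂ : k₂ ≠ 0) (h₃ : k₃ ≠ 0) :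
    2 * Real.sqrt 2 <
      Real.sqrt (|k₁| / ((|k₂| + |k₃|) / 2)) + Real.sqrt (|k₂| / ((|k₁| + |k₃|) / 2)) +
        Real.sqrt (|k₃| / ((|k₁| + |k₂|) / 2)) := by
  simp only [Real.sqrt_div_half, ← mul_add]
  rw [mul_comm]
  exact mul_lt_mul_of_pos_left
    (Real.two_lt_sqrt_div_add_sqrt_div_add_sqrt_div (abs_pos.mpr h₁) (abs_pos.mpr h₂)
      (abs_pos.mpr h₃))
    (by positivity)
end

section
/- Let n ≥ 2 and let λ₁, …, λₙ be real numbers. Let M = max{λ₁, …, λₙ} and m = min{λ₁, …, λₙ}. Then ((λ₁ + ⋯ + λₙ)/n)² ≤ (2·(λ₁² + ⋯ + λₙ²) − (M − m)²)/(2n). -/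
/-!
Since `∑ λᵢ² - (∑ λᵢ)² / n = ∑ (λᵢ - H)²`, the claim says that the squared deviations from
the mean add up to at least `(M - m)² / 2`. This holds for any two of the `λᵢ` in place of
`M` and `m`: already the deviations of `λᵢ` and `λⱼ` alone give
`(λᵢ - H)² + (λⱼ - H)² ≥ (λᵢ - λⱼ)² / 2`.
-/

open Finset

variable {ι K : Type*}

theorem Finset.sum_sq_sub_mean [Field K] [CharZero K] (s : Finset ι) (f : ι → K) :
    ∑ i ∈ s, (f i - (∑ j ∈ s, f j) / #s) ^ 2 = ∑ i ∈ s, f i ^ 2 - (∑ i ∈ s, f i) ^ 2 / #s := by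
  rcases s.eq_empty_or_nonempty with rfl | hs
  · simp
  have hcard : (#s : K) ≠ 0 := by exact_mod_cast hs.card_pos.ne'
  simp only [sub_sq, sum_add_distrib, sum_sub_distrib, sum_const, nsmul_eq_mul, ← sum_mul,
    ← mul_sum]
  field_simp
  ring

theorem sq_sub_le_two_mul_sum_sq_sub [CommRing K] [LinearOrder K] [IsStrictOrderedRing K]
    [Fintype ι] (f : ι → K) (i j : ι) (c : K) :
    (f i - f j) ^ 2 ≤ 2 * ∑ k, (f k - c) ^ 2 := by
  rcases eq_or_ne i j with rfl | hij
  · simpa using sum_nonneg fun k _ => sq_nonneg (f k - c)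
  calc (f i - f j) ^ 2 = ((f i - c) + (c - f j)) ^ 2 := by ring
    _ ≤ 2 * ((f i - c) ^ 2 + (c - f j) ^ 2) := add_sq_le
    _ = 2 * ((f i - c) ^ 2 + (f j - c) ^ 2) := by ring
    _ ≤ 2 * ∑ k, (f k - c) ^ 2 := by
        gcongr
        exact add_le_sum (f := fun k => (f k - c) ^ 2) (fun k _ => sq_nonneg _) (mem_univ i)
          (mem_univ j) hij

theorem mean_curv_sq_le_general (n : ℕ) (l : Fin n → ℝ) (M m : ℝ)
    (hM : IsGreatest (Set.range l) M) (hm : IsLeast (Set.range l) m) :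
    ((∑ i, l i) / (n : ℝ)) ^ 2 ≤ (2 * (∑ i, (l i) ^ 2) - (M - m) ^ 2) / (2 * (n : ℝ)) := by
  obtain ⟨⟨i, rfl⟩, -⟩ := hM
  obtain ⟨⟨j, rfl⟩, -⟩ := hm
  have hn : (0 : ℝ) < n := by exact_mod_cast i.pos
  have hspread := sq_sub_le_two_mul_sum_sq_sub l i j ((∑ k, l k) / n)
  have hvar : ∑ k, (l k - (∑ k, l k) / n) ^ 2 = ∑ k, l k ^ 2 - (∑ k, l k) ^ 2 / n := by
    simpa using sum_sq_sub_mean univ l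
  rw [hvar] at hspread
  have hmean : ((∑ k, l k) / n) ^ 2 * (2 * n) = 2 * ((∑ k, l k) ^ 2 / n) := by
    field_simp
  rw [le_div_iff₀ (by positivity), hmean]
  linarith

/-- The key extrinsic estimate `H² ≤ (2‖h‖² − s²(L))/(2n)`, expressed purely in terms of
the eigenvalues `λ₁, …, λₙ` of the shape operator. -/
theorem mean_curv_sq_le (n : ℕ) (hn : 2 ≤ n) (l : Fin n → ℝ) (M m : ℝ)
    (hM : IsGreatest (Set.range l) M) (hm : IsLeast (Set.range l) m) :
    ((∑ i, l i) / (n : ℝ)) ^ 2 ≤ (2 * (∑ i, (l i) ^ 2) - (M - m) ^ 2) / (2 * (n : ℝ)) :=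
  mean_curv_sq_le_general n l M m hM hm
end
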